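/- Let F be a field of characteristic 0 and let B be an n×n symmetric matrix over F with qpr(B) = q_1 q_2 ⋯ q_{n−1} A, where q_k ∈ {A, S} for k = 1, …, n−1. Then there exists an (n+1)×(n+1) symmetric matrix B' over F such that qpr(B') = q_1 q_2 ⋯ q_{n−1} A A. -/

import Mathlib

open Matrix

/-- The minor of a square matrix `B` lying in the rows indexed by `α` and the columns
indexed by `β` (each listed in increasing order); junk value `0` if `α.card ≠ β.card`. -/
def qMinor {R : Type*} [CommRing R] {m : Type*} [Fintype m] [LinearOrder m]
    (B : Matrix m m R) (α β : Finset m) : R :=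
  if h : β.card = α.card then
    (Matrix.of fun i j : Fin α.card =>
      B (α.orderEmbOfFin rfl i) (β.orderEmbOfFin h j)).det
  else 0

/-- `α` and `β` index a quasi-principal submatrix of order `k`, i.e.
`|α| = |β| = k` and `k - 1 ≤ |α ∩ β| (≤ k)`. -/
def IsQPPair {m : Type*} [DecidableEq m] (k : ℕ) (α β : Finset m) : Prop :=
  α.card = k ∧ β.card = k ∧ k - 1 ≤ (α ∩ β).card

/-- All quasi-principal minors of `B` of order `k` are nonzero. -/
def QPAllNonzero {R : Type*} [CommRing R] {m : Type*} [Fintype m] [LinearOrder m]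
    (B : Matrix m m R) (k : ℕ) : Prop :=
  ∀ α β : Finset m, IsQPPair k α β → qMinor B α β ≠ 0

/-- All quasi-principal minors of `B` of order `k` are zero. -/
def QPAllZero {R : Type*} [CommRing R] {m : Type*} [Fintype m] [LinearOrder m]
    (B : Matrix m m R) (k : ℕ) : Prop :=
  ∀ α β : Finset m, IsQPPair k α β → qMinor B α β = 0

/-- The three possible letters of a qpr-sequence. -/
inductive QPR : Type
  | A
  | S
  | N
deriving DecidableEq

open Classical in
/-- The letter of the qpr-sequence of `B` corresponding to order `k`:
`A` if all quasi-principal minors of order `k` are nonzero, `N` if all are zero,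
and `S` otherwise. -/
noncomputable def qprEntry {R : Type*} [CommRing R] {m : Type*} [Fintype m] [LinearOrder m]
    (B : Matrix m m R) (k : ℕ) : QPR :=
  if QPAllNonzero B k then QPR.A
  else if QPAllZero B k then QPR.N
  else QPR.S

/-- A sequence of letters `q 0, …, q (n-1)` (standing for `q_1 ⋯ q_n`) is attainable
over `F` if it is the qpr-sequence of an `n × n` symmetric matrix over `F`. -/
def Attainable (F : Type*) [Field F] {n : ℕ} (q : Fin n → QPR) : Prop :=
  ∃ B : Matrix (Fin n) (Fin n) F, B.IsSymm ∧ ∀ k : Fin n, qprEntry B ((k : ℕ) + 1) = q k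

/-- The Schur complement `B/B[γ] = B[γᶜ] - B[γᶜ, γ] B[γ]⁻¹ B[γ, γᶜ]`,
with rows and columns indexed by `γᶜ` (indexing inherited from `B`). -/
noncomputable def schurCompl {R : Type*} [CommRing R] {n : ℕ}
    (B : Matrix (Fin n) (Fin n) R) (γ : Finset (Fin n)) :
    Matrix ↥(γᶜ) ↥(γᶜ) R :=
  B.submatrix (fun i : ↥(γᶜ) => (i : Fin n)) (fun j : ↥(γᶜ) => (j : Fin n)) -
    B.submatrix (fun i : ↥(γᶜ) => (i : Fin n)) (fun j : ↥γ => (j : Fin n)) *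
      (B.submatrix (fun i : ↥γ => (i : Fin n)) fun j : ↥γ => (j : Fin n))⁻¹ *
      B.submatrix (fun i : ↥γ => (i : Fin n)) fun j : ↥(γᶜ) => (j : Fin n)

/-- The `(m+1) × (m+1)` matrix with block form `[[A, x], [yᵀ, b]]`. -/
def borderMat {R : Type*} [CommRing R] {m : ℕ} (A : Matrix (Fin m) (Fin m) R)
    (x y : Fin m → R) (b : R) : Matrix (Fin (m + 1)) (Fin (m + 1)) R :=
  Matrix.of fun i j =>
    if hi : (i : ℕ) < m then
      if hj : (j : ℕ) < m then A ⟨i, hi⟩ ⟨j, hj⟩ else x ⟨i, hi⟩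
    else
      if hj : (j : ℕ) < m then y ⟨j, hj⟩ else b

/-!
Border `B` symmetrically by a column `x` and a corner `b`. The quasi-principal minors avoiding the
new index are those of `B`, so every letter `S` persists. For any other quasi-principal pair of
order `k ≤ n` some border turns its minor, up to sign, into a principal minor of `B` of order `k`:
take `x` to be column `s` of `B` with `b = B s s`, or, for an almost-principal pair with row set
`γ ∪ {a}` and column set `γ ∪ {c}`, the sum of columns `a` and `c`. If all quasi-principal minors of
`B` of order `k` are nonzero, each of these minors is thus a nonzero polynomial in `(x, b)`, and
over an infinite field one border avoids the zeros of all of them at once. The full determinant,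
`b · det B` at `x = 0`, is covered in the same way.
-/

open Finset Function

section QMinor

variable {R : Type*} [CommRing R] {m : Type*} [Fintype m] [LinearOrder m]

lemma qMinor_eq_det (M : Matrix m m R) {α β : Finset m} {k : ℕ} (hα : #α = k) (hβ : #β = k) :
    qMinor M α β = (M.submatrix (α.orderEmbOfFin hα) (β.orderEmbOfFin hβ)).det := by
  subst hα
  rw [qMinor, dif_pos hβ]
  rfl

lemma qMinor_of_card_ne (M : Matrix m m R) {α β : Finset m} (h : #α ≠ #β) :
    qMinor M α β = 0 :=
  dif_neg (Ne.symm h)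

lemma qMinor_transpose (M : Matrix m m R) (α β : Finset m) : qMinor Mᵀ α β = qMinor M β α := by
  by_cases h : #α = #β
  · rw [qMinor_eq_det _ rfl h.symm, qMinor_eq_det _ h.symm rfl, ← det_transpose,
      transpose_submatrix, transpose_transpose]
  · rw [qMinor_of_card_ne _ h, qMinor_of_card_ne _ (Ne.symm h)]

lemma Matrix.IsSymm.qMinor_comm {M : Matrix m m R} (hM : M.IsSymm) (α β : Finset m) :
    qMinor M α β = qMinor M β α := by
  rw [← qMinor_transpose, hM.eq]

lemma qMinor_map {S : Type*} [CommRing S] (f : R →+* S) (M : Matrix m m R) (α β : Finset m) :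
    qMinor (M.map f) α β = f (qMinor M α β) := by
  by_cases h : #α = #β
  · rw [qMinor_eq_det _ rfl h.symm, qMinor_eq_det _ rfl h.symm, submatrix_map,
      ← RingHom.mapMatrix_apply, RingHom.map_det]
  · rw [qMinor_of_card_ne _ h, qMinor_of_card_ne _ h, map_zero]

lemma det_submatrix_equiv_ne_zero_iff {ι κ : Type*} [Fintype ι] [DecidableEq ι] [Fintype κ]
    [DecidableEq κ] (N : Matrix ι ι R) (e₁ e₂ : κ ≃ ι) :
    (N.submatrix e₁ e₂).det ≠ 0 ↔ N.det ≠ 0 := by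
  have hN : N.submatrix e₁ e₂ = (N.submatrix id (e₁.symm.trans e₂)).submatrix e₁ e₁ := by
    ext; simp
  rw [hN, det_submatrix_equiv_self, det_permute']
  rcases Int.units_eq_one_or (Equiv.Perm.sign (e₁.symm.trans e₂)) with h | h <;> simp [h]

lemma exists_equiv_comp_eq_of_range_eq {ι κ μ : Type*} {f : ι → μ} {g : κ → μ}
    (hf : Injective f) (hg : Injective g) (h : Set.range f = Set.range g) :
    ∃ π : ι ≃ κ, g ∘ π = f :=
  ⟨(Equiv.ofInjective f hf).trans ((Equiv.setCongr h).trans (Equiv.ofInjective g hg).symm),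
    funext fun i => by simp [Equiv.apply_ofInjective_symm]⟩

lemma qMinor_image_univ_ne_zero_iff {ι : Type*} [Fintype ι] [DecidableEq ι] (M : Matrix m m R)
    {r c : ι → m} (hr : Injective r) (hc : Injective c) :
    qMinor M (univ.image r) (univ.image c) ≠ 0 ↔ (M.submatrix r c).det ≠ 0 := by
  have hα : #(univ.image r) = Fintype.card ι := by rw [card_image_of_injective _ hr, card_univ]
  have hβ : #(univ.image c) = Fintype.card ι := by rw [card_image_of_injective _ hc, card_univ]
  obtain ⟨πr, hπr⟩ := exists_equiv_comp_eq_of_range_eq (orderEmbOfFin _ hα).injective hr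
    (by rw [range_orderEmbOfFin, coe_image, coe_univ, Set.image_univ])
  obtain ⟨πc, hπc⟩ := exists_equiv_comp_eq_of_range_eq (orderEmbOfFin _ hβ).injective hc
    (by rw [range_orderEmbOfFin, coe_image, coe_univ, Set.image_univ])
  rw [qMinor_eq_det M hα hβ, ← hπr, ← hπc, ← submatrix_submatrix,
    det_submatrix_equiv_ne_zero_iff]

lemma qMinor_univ_ne_zero_iff (M : Matrix m m R) : qMinor M univ univ ≠ 0 ↔ M.det ≠ 0 := by
  simpa using qMinor_image_univ_ne_zero_iff M injective_id injective_id

lemma qMinor_submatrix_ne_zero_iff {m' : Type*} [Fintype m'] [LinearOrder m'] (M : Matrix m m R)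
    {σ τ : m' → m} {α β : Finset m'} (hσ : Set.InjOn σ α) (hτ : Set.InjOn τ β) :
    qMinor (M.submatrix σ τ) α β ≠ 0 ↔ qMinor M (α.image σ) (β.image τ) ≠ 0 := by
  by_cases h : #α = #β
  · have hσe : Injective (σ ∘ α.orderEmbOfFin rfl) := fun a b hab =>
      (α.orderEmbOfFin rfl).injective (hσ (orderEmbOfFin_mem _ _ a) (orderEmbOfFin_mem _ _ b) hab)
    have hτe : Injective (τ ∘ β.orderEmbOfFin h.symm) := fun a b hab =>
      (β.orderEmbOfFin h.symm).injective
        (hτ (orderEmbOfFin_mem _ _ a) (orderEmbOfFin_mem _ _ b) hab)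
    rw [qMinor_eq_det _ rfl h.symm, submatrix_submatrix,
      ← qMinor_image_univ_ne_zero_iff M hσe hτe,
      ← image_image, ← image_image, image_orderEmbOfFin_univ, image_orderEmbOfFin_univ]
  · rw [qMinor_of_card_ne _ h, qMinor_of_card_ne, ne_self_iff_false]
    rwa [card_image_of_injOn hσ, card_image_of_injOn hτ]

lemma qMinor_updateRow_add_smul_self (M : Matrix m m R) {i j : m} (hij : i ≠ j) (t : R)
    {α : Finset m} (hi : i ∈ α) (hj : j ∈ α) (β : Finset m) :
    qMinor (M.updateRow i (M i + t • M j)) α β = qMinor M α β := by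
  by_cases h : #α = #β
  · rw [qMinor_eq_det _ rfl h.symm, qMinor_eq_det _ rfl h.symm]
    set e := α.orderEmbOfFin rfl
    obtain ⟨p, rfl⟩ : i ∈ Set.range e := by rwa [range_orderEmbOfFin]
    obtain ⟨q, rfl⟩ : j ∈ Set.range e := by rwa [range_orderEmbOfFin]
    have hrow : (M.updateRow (e p) (M (e p) + t • M (e q))).submatrix e (β.orderEmbOfFin h.symm) =
        (M.submatrix e (β.orderEmbOfFin h.symm)).updateRow p
          ((M.submatrix e (β.orderEmbOfFin h.symm)) p +
            t • (M.submatrix e (β.orderEmbOfFin h.symm)) q) := by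
      ext a b
      simp [updateRow_apply, e.injective.eq_iff]
    rw [hrow, det_updateRow_add_smul_self _ (fun hpq => hij (congrArg e hpq))]
  · rw [qMinor_of_card_ne _ h, qMinor_of_card_ne _ h]

lemma qMinor_updateCol_add_smul_self (M : Matrix m m R) {i j : m} (hij : i ≠ j) (t : R)
    (α : Finset m) {β : Finset m} (hi : i ∈ β) (hj : j ∈ β) :
    qMinor (M.updateCol i (Mᵀ i + t • Mᵀ j)) α β = qMinor M α β := by
  rw [← transpose_transpose (M.updateCol _ _), ← updateRow_transpose, qMinor_transpose,
    qMinor_updateRow_add_smul_self _ hij t hi hj, qMinor_transpose]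

end QMinor

section Border

variable {R : Type*} [CommRing R] {n : ℕ}

@[simp] lemma borderMat_castSucc_castSucc (B : Matrix (Fin n) (Fin n) R) (x y : Fin n → R)
    (b : R) (i j : Fin n) : borderMat B x y b i.castSucc j.castSucc = B i j := by
  simp [borderMat]

@[simp] lemma borderMat_castSucc_last (B : Matrix (Fin n) (Fin n) R) (x y : Fin n → R)
    (b : R) (i : Fin n) : borderMat B x y b i.castSucc (Fin.last n) = x i := by
  simp [borderMat]

@[simp] lemma borderMat_last_castSucc (B : Matrix (Fin n) (Fin n) R) (x y : Fin n → R)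
    (b : R) (j : Fin n) : borderMat B x y b (Fin.last n) j.castSucc = y j := by
  simp [borderMat]

@[simp] lemma borderMat_last_last (B : Matrix (Fin n) (Fin n) R) (x y : Fin n → R) (b : R) :
    borderMat B x y b (Fin.last n) (Fin.last n) = b := by
  simp [borderMat]

lemma borderMat_isSymm {B : Matrix (Fin n) (Fin n) R} (hB : B.IsSymm) (x : Fin n → R) (b : R) :
    (borderMat B x x b).IsSymm := by
  ext i j
  induction i using Fin.lastCases <;> induction j using Fin.lastCases <;> simp [hB.apply]

lemma borderMat_submatrix_castSucc (B : Matrix (Fin n) (Fin n) R) (x y : Fin n → R) (b : R) :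
    (borderMat B x y b).submatrix Fin.castSucc Fin.castSucc = B := by
  ext i j
  simp

lemma borderMat_eq_submatrix (B : Matrix (Fin n) (Fin n) R) (s t : Fin n) :
    borderMat B (fun i => B i t) (B s) (B s t) =
      B.submatrix (Fin.lastCases s id) (Fin.lastCases t id) := by
  ext i j
  induction i using Fin.lastCases <;> induction j using Fin.lastCases <;> simp

lemma det_borderMat_zero (B : Matrix (Fin n) (Fin n) R) (b : R) :
    (borderMat B 0 0 b).det = b * B.det := by
  rw [det_succ_column _ (Fin.last n), Fin.sum_univ_castSucc]
  simp [Fin.succAbove_last, borderMat_submatrix_castSucc, ← two_mul, pow_mul]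

/-- The border is `x = B (eₐ + e_c)`, `b = (eₐ + e_c)ᵀ B (eₐ + e_c)`; subtracting row `a` from the
last row and then column `c` from the last column leaves a submatrix of `B`. -/
lemma qMinor_borderMat_add_cols {B : Matrix (Fin n) (Fin n) R} (hB : B.IsSymm) (a c : Fin n)
    {α β : Finset (Fin (n + 1))} (hα : Fin.last n ∈ α) (haα : a.castSucc ∈ α)
    (hβ : Fin.last n ∈ β) (hcβ : c.castSucc ∈ β) :
    qMinor (borderMat B (fun i => B i a + B i c) (fun i => B i a + B i c)
      (B a a + B a c + (B c a + B c c))) α β =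
      qMinor (B.submatrix (Fin.lastCases c id) (Fin.lastCases a id)) α β := by
  set M := borderMat B (fun i => B i a + B i c) (fun i => B i a + B i c)
      (B a a + B a c + (B c a + B c c))
  set M₁ := M.updateRow (Fin.last n) (M (Fin.last n) + (-1 : R) • M a.castSucc)
  have hM₂ : M₁.updateCol (Fin.last n) (M₁ᵀ (Fin.last n) + (-1 : R) • M₁ᵀ c.castSucc) =
      B.submatrix (Fin.lastCases c id) (Fin.lastCases a id) := by
    ext i j
    induction i using Fin.lastCases <;> induction j using Fin.lastCases <;>
      simp [M₁, M, updateRow_apply, hB.apply]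
    ring
  calc qMinor M α β = qMinor M₁ α β :=
        (qMinor_updateRow_add_smul_self _ (Fin.castSucc_ne_last a).symm _ hα haα β).symm
    _ = _ := (qMinor_updateCol_add_smul_self _ (Fin.castSucc_ne_last c).symm _ α hβ hcβ).symm
    _ = _ := by rw [hM₂]

end Border

section QPPair

variable {m : Type*} [DecidableEq m] {k : ℕ} {α β : Finset m}

lemma IsQPPair.symm (h : IsQPPair k α β) : IsQPPair k β α :=
  ⟨h.2.1, h.1, by rw [inter_comm]; exact h.2.2⟩

lemma isQPPair_image_iff {m' : Type*} [DecidableEq m'] {f : m → m'} (hf : Injective f) :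
    IsQPPair k (α.image f) (β.image f) ↔ IsQPPair k α β := by
  simp only [IsQPPair, ← image_inter _ _ hf, card_image_of_injective _ hf]

lemma isQPPair_insert_iff {a : m} (hα : a ∉ α) (hβ : a ∉ β) :
    IsQPPair (k + 1) (insert a α) (insert a β) ↔ IsQPPair k α β := by
  have hαβ : a ∉ α ∩ β := fun h => hα (mem_inter.1 h).1
  simp only [IsQPPair, ← insert_inter_distrib, card_insert_of_notMem hα,
    card_insert_of_notMem hβ, card_insert_of_notMem hαβ]
  omega

lemma IsQPPair.subset_of_insert {a : m} (h : IsQPPair k (insert a α) β) (hα : a ∉ α)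
    (hβ : a ∉ β) : α ⊆ β := by
  obtain ⟨hαk, -, hαβ⟩ := h
  rw [card_insert_of_notMem hα] at hαk
  rw [insert_inter_of_notMem hβ] at hαβ
  exact inter_eq_left.1 (eq_of_subset_of_card_le inter_subset_left (by omega))

lemma IsQPPair.exists_insert_eq (h : IsQPPair k α β) (hne : α ≠ β) :
    ∃ a ∈ α, a ∉ β ∧ ∃ c ∈ β, c ∉ α ∧ insert c α = insert a β := by
  obtain ⟨hα, hβ, hαβ⟩ := h
  have hunion : #(α ∪ β) ≤ k + 1 := by
    have := card_union_add_card_inter α β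
    omega
  obtain ⟨a, haα, haβ⟩ := not_subset.1 fun hs => hne (eq_of_subset_of_card_le hs (by omega))
  obtain ⟨c, hcβ, hcα⟩ := not_subset.1 fun hs => hne (eq_of_subset_of_card_le hs (by omega)).symm
  refine ⟨a, haα, haβ, c, hcβ, hcα, ?_⟩
  rw [eq_of_subset_of_card_le (insert_subset (mem_union_right _ hcβ) subset_union_left)
      (by rw [card_insert_of_notMem hcα]; omega),
    eq_of_subset_of_card_le (insert_subset (mem_union_left _ haα) subset_union_right)
      (by rw [card_insert_of_notMem haβ]; omega)]

end QPPair

lemma QPAllNonzero.qMinor_self {R : Type*} [CommRing R] {m : Type*} [Fintype m] [LinearOrder m]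
    {B : Matrix m m R} {k : ℕ} (h : QPAllNonzero B k) {s : Finset m} (hs : #s = k) :
    qMinor B s s ≠ 0 :=
  h s s ⟨hs, hs, by rw [inter_self]; omega⟩

section FinLast

variable {n : ℕ}

lemma exists_eq_image_castSucc {α : Finset (Fin (n + 1))} (h : Fin.last n ∉ α) :
    ∃ α₀ : Finset (Fin n), α = α₀.image Fin.castSucc := by
  refine ⟨univ.filter (·.castSucc ∈ α), ?_⟩
  ext u
  induction u using Fin.lastCases <;> simp [h, Fin.castSucc_ne_last]

lemma exists_eq_insert_last_image_castSucc {α : Finset (Fin (n + 1))} (h : Fin.last n ∈ α) :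
    ∃ α₀ : Finset (Fin n), α = insert (Fin.last n) (α₀.image Fin.castSucc) := by
  obtain ⟨α₀, hα₀⟩ := exists_eq_image_castSucc (notMem_erase (Fin.last n) α)
  exact ⟨α₀, by rw [← hα₀, insert_erase h]⟩

lemma last_notMem_image_castSucc (α₀ : Finset (Fin n)) : Fin.last n ∉ α₀.image Fin.castSucc := by
  simp [Fin.castSucc_ne_last]

lemma image_lastCases_image_castSucc (s : Fin n) (α₀ : Finset (Fin n)) :
    (α₀.image Fin.castSucc).image (Fin.lastCases s id : Fin (n + 1) → Fin n) = α₀ := by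
  simp [image_image, Function.comp_def]

lemma image_lastCases_insert_last (s : Fin n) (α₀ : Finset (Fin n)) :
    (insert (Fin.last n) (α₀.image Fin.castSucc)).image
      (Fin.lastCases s id : Fin (n + 1) → Fin n) = insert s α₀ := by
  rw [image_insert, image_lastCases_image_castSucc, Fin.lastCases_last]

lemma injOn_lastCases_image_castSucc (s : Fin n) (α₀ : Finset (Fin n)) :
    Set.InjOn (Fin.lastCases s id : Fin (n + 1) → Fin n) ↑(α₀.image Fin.castSucc) := by
  rw [coe_image]
  rintro _ ⟨a, -, rfl⟩ _ ⟨b, -, rfl⟩ h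
  simp_all

lemma injOn_lastCases_insert_last {s : Fin n} {α₀ : Finset (Fin n)} (hs : s ∉ α₀) :
    Set.InjOn (Fin.lastCases s id : Fin (n + 1) → Fin n)
      ↑(insert (Fin.last n) (α₀.image Fin.castSucc)) := by
  rw [coe_insert, Set.injOn_insert (last_notMem_image_castSucc α₀)]
  refine ⟨injOn_lastCases_image_castSucc s α₀, ?_⟩
  rw [← coe_image, image_lastCases_image_castSucc, Fin.lastCases_last]
  exact hs

end FinLast

section Witness

variable {R : Type*} [CommRing R] {n : ℕ} {B : Matrix (Fin n) (Fin n) R}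

lemma qMinor_borderMat_image_castSucc_ne_zero_iff (B : Matrix (Fin n) (Fin n) R)
    (x y : Fin n → R) (b : R) (α₀ β₀ : Finset (Fin n)) :
    qMinor (borderMat B x y b) (α₀.image Fin.castSucc) (β₀.image Fin.castSucc) ≠ 0 ↔
      qMinor B α₀ β₀ ≠ 0 := by
  conv_rhs => rw [← borderMat_submatrix_castSucc B x y b]
  rw [qMinor_submatrix_ne_zero_iff _ (Fin.castSucc_injective n).injOn
    (Fin.castSucc_injective n).injOn]

lemma qMinor_borderMat_col_ne_zero_iff (hB : B.IsSymm) (s : Fin n) {α β : Finset (Fin (n + 1))}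
    (hα : Set.InjOn (Fin.lastCases s id : Fin (n + 1) → Fin n) α)
    (hβ : Set.InjOn (Fin.lastCases s id : Fin (n + 1) → Fin n) β) :
    qMinor (borderMat B (fun i => B i s) (fun i => B i s) (B s s)) α β ≠ 0 ↔
      qMinor B (α.image (Fin.lastCases s id)) (β.image (Fin.lastCases s id)) ≠ 0 := by
  have hrow : (fun i => B i s) = B s := funext fun i => hB.apply s i
  have hsub : borderMat B (fun i => B i s) (fun i => B i s) (B s s) =
      B.submatrix (Fin.lastCases s id) (Fin.lastCases s id) := by
    rw [← borderMat_eq_submatrix, hrow]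
  rw [hsub, qMinor_submatrix_ne_zero_iff _ hα hβ]

lemma exists_qMinor_borderMat_ne_zero_of_last_mem_of_last_notMem (hB : B.IsSymm) {k : ℕ}
    (hall : QPAllNonzero B k) {α β : Finset (Fin (n + 1))} (h : IsQPPair k α β)
    (hα : Fin.last n ∈ α) (hβ : Fin.last n ∉ β) :
    ∃ x b, qMinor (borderMat B x x b) α β ≠ 0 := by
  obtain ⟨γ, rfl⟩ := exists_eq_insert_last_image_castSucc hα
  obtain ⟨β₀, rfl⟩ := exists_eq_image_castSucc hβ
  have hcs := Fin.castSucc_injective n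
  have hγβ : γ ⊆ β₀ :=
    (image_subset_image_iff hcs).1 (h.subset_of_insert (last_notMem_image_castSucc γ) hβ)
  have hγk := h.1
  have hβk := h.2.1
  rw [card_insert_of_notMem (last_notMem_image_castSucc γ), card_image_of_injective _ hcs]
    at hγk
  rw [card_image_of_injective _ hcs] at hβk
  obtain ⟨s, hsβ, hsγ⟩ := exists_mem_notMem_of_card_lt_card (s := γ) (t := β₀) (by omega)
  have hβ₀ : insert s γ = β₀ :=
    eq_of_subset_of_card_le (insert_subset hsβ hγβ) (by rw [card_insert_of_notMem hsγ]; omega)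
  refine ⟨fun i => B i s, B s s, ?_⟩
  rw [qMinor_borderMat_col_ne_zero_iff hB s (injOn_lastCases_insert_last hsγ)
    (injOn_lastCases_image_castSucc s β₀), image_lastCases_insert_last,
    image_lastCases_image_castSucc, hβ₀]
  exact hall.qMinor_self hβk

lemma exists_qMinor_borderMat_ne_zero_of_last_mem_of_last_mem (hB : B.IsSymm) {k : ℕ}
    (hall : QPAllNonzero B k) (hk : k ≤ n) {α β : Finset (Fin (n + 1))} (h : IsQPPair k α β)
    (hα : Fin.last n ∈ α) (hβ : Fin.last n ∈ β) :
    ∃ x b, qMinor (borderMat B x x b) α β ≠ 0 := by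
  obtain ⟨α₀, rfl⟩ := exists_eq_insert_last_image_castSucc hα
  obtain ⟨β₀, rfl⟩ := exists_eq_insert_last_image_castSucc hβ
  obtain ⟨j, rfl⟩ : ∃ j, k = j + 1 := ⟨k - 1, by
    have := h.1
    rw [card_insert_of_notMem (last_notMem_image_castSucc α₀)] at this
    omega⟩
  rw [isQPPair_insert_iff (last_notMem_image_castSucc α₀) (last_notMem_image_castSucc β₀),
    isQPPair_image_iff (Fin.castSucc_injective n)] at h
  rcases eq_or_ne α₀ β₀ with rfl | hne
  · obtain ⟨s, -, hs⟩ := exists_mem_notMem_of_card_lt_card (s := α₀) (t := univ)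
      (by rw [card_univ, Fintype.card_fin, h.1]; omega)
    refine ⟨fun i => B i s, B s s, ?_⟩
    rw [qMinor_borderMat_col_ne_zero_iff hB s (injOn_lastCases_insert_last hs)
      (injOn_lastCases_insert_last hs), image_lastCases_insert_last]
    exact hall.qMinor_self (by rw [card_insert_of_notMem hs, h.1])
  · obtain ⟨a, haα, haβ, c, hcβ, hcα, hδ⟩ := h.exists_insert_eq hne
    refine ⟨fun i => B i a + B i c, B a a + B a c + (B c a + B c c), ?_⟩
    rw [qMinor_borderMat_add_cols hB a c (mem_insert_self _ _)
      (mem_insert_of_mem (mem_image_of_mem _ haα)) (mem_insert_self _ _)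
      (mem_insert_of_mem (mem_image_of_mem _ hcβ)),
      qMinor_submatrix_ne_zero_iff _ (injOn_lastCases_insert_last hcα)
        (injOn_lastCases_insert_last haβ),
      image_lastCases_insert_last, image_lastCases_insert_last, hδ]
    exact hall.qMinor_self (by rw [card_insert_of_notMem haβ, h.2.1])

lemma exists_qMinor_borderMat_ne_zero (hB : B.IsSymm) {k : ℕ} (hall : QPAllNonzero B k)
    (hk : k ≤ n) {α β : Finset (Fin (n + 1))} (h : IsQPPair k α β) :
    ∃ x b, qMinor (borderMat B x x b) α β ≠ 0 := by
  by_cases hα : Fin.last n ∈ α <;> by_cases hβ : Fin.last n ∈ β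
  · exact exists_qMinor_borderMat_ne_zero_of_last_mem_of_last_mem hB hall hk h hα hβ
  · exact exists_qMinor_borderMat_ne_zero_of_last_mem_of_last_notMem hB hall h hα hβ
  · obtain ⟨x, b, hxb⟩ :=
      exists_qMinor_borderMat_ne_zero_of_last_mem_of_last_notMem hB hall h.symm hβ hα
    exact ⟨x, b, by rwa [(borderMat_isSymm hB x b).qMinor_comm]⟩
  · obtain ⟨α₀, rfl⟩ := exists_eq_image_castSucc hα
    obtain ⟨β₀, rfl⟩ := exists_eq_image_castSucc hβ
    refine ⟨0, 0, ?_⟩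
    rw [qMinor_borderMat_image_castSucc_ne_zero_iff]
    exact hall α₀ β₀ ((isQPPair_image_iff (Fin.castSucc_injective n)).1 h)

lemma qMinor_borderMat_univ_ne_zero (hall : QPAllNonzero B n) :
    qMinor (borderMat B 0 0 1) univ univ ≠ 0 := by
  rw [qMinor_univ_ne_zero_iff, det_borderMat_zero, one_mul, ← qMinor_univ_ne_zero_iff]
  exact hall.qMinor_self (by simp)

end Witness

lemma MvPolynomial.exists_eval_forall_ne_zero {R σ ι : Type*} [CommRing R] [IsDomain R]
    [Infinite R] (s : Finset ι) (p : ι → MvPolynomial σ R) (hp : ∀ i ∈ s, p i ≠ 0) :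
    ∃ v : σ → R, ∀ i ∈ s, eval v (p i) ≠ 0 := by
  obtain ⟨v, hv⟩ : ∃ v, eval v (∏ i ∈ s, p i) ≠ 0 := by
    by_contra! h
    exact prod_ne_zero_iff.2 hp (funext fun v => by rw [h v, map_zero])
  rw [map_prod] at hv
  exact ⟨v, prod_ne_zero_iff.1 hv⟩

open MvPolynomial in
lemma exists_borderMat_forall_qMinor_ne_zero {R : Type*} [CommRing R] [IsDomain R] [Infinite R]
    {n : ℕ} (B : Matrix (Fin n) (Fin n) R) :
    ∃ x b, ∀ α β : Finset (Fin (n + 1)), (∃ x' b', qMinor (borderMat B x' x' b') α β ≠ 0) →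
      qMinor (borderMat B x x b) α β ≠ 0 := by
  classical
  let P : Matrix (Fin (n + 1)) (Fin (n + 1)) (MvPolynomial (Fin (n + 1)) R) :=
    borderMat (B.map C) (fun i => X i.castSucc) (fun i => X i.castSucc) (X (Fin.last n))
  have hP : ∀ v : Fin (n + 1) → R, P.map (eval v) =
      borderMat B (v ∘ Fin.castSucc) (v ∘ Fin.castSucc) (v (Fin.last n)) := by
    intro v
    ext i j
    induction i using Fin.lastCases <;> induction j using Fin.lastCases <;> simp [P]
  obtain ⟨v, hv⟩ := exists_eval_forall_ne_zero
    (univ.filter fun p : Finset (Fin (n + 1)) × Finset (Fin (n + 1)) => qMinor P p.1 p.2 ≠ 0)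
    (fun p => qMinor P p.1 p.2) (by simp)
  refine ⟨v ∘ Fin.castSucc, v (Fin.last n), fun α β ⟨x', b', hx'b'⟩ => ?_⟩
  have hPαβ : qMinor P α β ≠ 0 := fun h0 => hx'b' <| by
    have h := congrArg (eval (Fin.snoc x' b')) h0
    rwa [← qMinor_map, hP, map_zero, Fin.snoc_comp_castSucc, Fin.snoc_last] at h
  have h := hv (α, β) (by simpa using hPαβ)
  rwa [← qMinor_map, hP] at h

section Entry

variable {R : Type*} [CommRing R] {m : Type*} [Fintype m] [LinearOrder m]
  {B : Matrix m m R} {k : ℕ}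

lemma qprEntry_eq_A_iff : qprEntry B k = QPR.A ↔ QPAllNonzero B k := by
  unfold qprEntry
  split_ifs <;> simp_all

lemma qprEntry_eq_S_iff : qprEntry B k = QPR.S ↔ ¬QPAllNonzero B k ∧ ¬QPAllZero B k := by
  unfold qprEntry
  split_ifs <;> simp_all

end Entry

lemma qprEntry_borderMat_of_eq_S {R : Type*} [CommRing R] {n k : ℕ}
    {B : Matrix (Fin n) (Fin n) R} (h : qprEntry B k = QPR.S) (x : Fin n → R) (b : R) :
    qprEntry (borderMat B x x b) k = QPR.S := by
  rw [qprEntry_eq_S_iff] at h ⊢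
  refine ⟨fun hall => h.1 fun α₀ β₀ hαβ => ?_, fun hzero => h.2 fun α₀ β₀ hαβ => ?_⟩
  · rw [← qMinor_borderMat_image_castSucc_ne_zero_iff B x x b]
    exact hall _ _ ((isQPPair_image_iff (Fin.castSucc_injective n)).2 hαβ)
  · by_contra hne
    exact (qMinor_borderMat_image_castSucc_ne_zero_iff B x x b α₀ β₀).2 hne
      (hzero _ _ ((isQPPair_image_iff (Fin.castSucc_injective n)).2 hαβ))

theorem stmt_9_general {F : Type*} [Field F] [CharZero F] {n : ℕ}
    (B : Matrix (Fin n) (Fin n) F) (hB : B.IsSymm)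
    (hAS : ∀ k : ℕ, 1 ≤ k → k ≤ n - 1 →
      qprEntry B k = QPR.A ∨ qprEntry B k = QPR.S)
    (hlast : qprEntry B n = QPR.A) :
    ∃ B' : Matrix (Fin (n + 1)) (Fin (n + 1)) F, B'.IsSymm ∧
      (∀ k : ℕ, 1 ≤ k → k ≤ n - 1 → qprEntry B' k = qprEntry B k) ∧
      qprEntry B' n = QPR.A ∧ qprEntry B' (n + 1) = QPR.A := by
  obtain ⟨x, b, hgen⟩ := exists_borderMat_forall_qMinor_ne_zero B
  have hA : ∀ k ≤ n, qprEntry B k = QPR.A → qprEntry (borderMat B x x b) k = QPR.A := by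
    simp only [qprEntry_eq_A_iff]
    exact fun k hk hall α β h => hgen α β (exists_qMinor_borderMat_ne_zero hB hall hk h)
  refine ⟨borderMat B x x b, borderMat_isSymm hB x b, fun k hk₁ hk₂ => ?_, hA n le_rfl hlast, ?_⟩
  · rcases hAS k hk₁ hk₂ with h | h <;> rw [h]
    · exact hA k (by omega) h
    · exact qprEntry_borderMat_of_eq_S h x b
  · rw [qprEntry_eq_A_iff]
    rintro α β ⟨hα, hβ, -⟩
    rw [eq_univ_of_card α (by simpa using hα), eq_univ_of_card β (by simpa using hβ)]
    exact hgen _ _ ⟨0, 1, qMinor_borderMat_univ_ne_zero (qprEntry_eq_A_iff.1 hlast)⟩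

/-- over a field of characteristic 0, if `B` is an `n × n` symmetric matrix
with `qpr(B) = q_1 ⋯ q_{n-1} A` and `q_k ∈ {A, S}` for `k = 1, …, n-1`, then there is an
`(n+1) × (n+1)` symmetric matrix `B'` with `qpr(B') = q_1 ⋯ q_{n-1} A A`. -/
theorem stmt_9 {F : Type*} [Field F] [CharZero F] {n : ℕ} (hn : 0 < n)
    (B : Matrix (Fin n) (Fin n) F) (hB : B.IsSymm)
    (hAS : ∀ k : ℕ, 1 ≤ k → k ≤ n - 1 →
      qprEntry B k = QPR.A ∨ qprEntry B k = QPR.S)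
    (hlast : qprEntry B n = QPR.A) :
    ∃ B' : Matrix (Fin (n + 1)) (Fin (n + 1)) F, B'.IsSymm ∧
      (∀ k : ℕ, 1 ≤ k → k ≤ n - 1 → qprEntry B' k = qprEntry B k) ∧
      qprEntry B' n = QPR.A ∧ qprEntry B' (n + 1) = QPR.A :=
  stmt_9_general B hB hAS hlast
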